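/- Let C > 0 be real, n ≥ 2 an integer, and α > −1 a real number with α ≥ n/C. Let x_{n,n}(α) < ⋯ < x_{n,1}(α) denote the n zeros of the generalized Laguerre polynomial L_n^{(α)}. Then for every k ∈ {1, …, n−1}, x_{n,k}(α) − x_{n,k+1}(α) ≥ √(3/(2(C+1))) · √(α/n). -/

import Mathlib

/-!
Write `L_n^{(α)} = c ∏ᵢ (X - xᵢ)` and fix a zero `t = x_k`. Evaluating the Laguerre equation
`x y'' + (α + 1 - x) y' + n y = 0` and its derivative at `t`, and dividing by `y'(t)`, expresses
`S₁ = ∑_{i ≠ k} 1/(t - xᵢ)` and `S₂ = ∑_{i ≠ k} 1/(t - xᵢ)²` through `t` alone: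
`12 t² S₂ = -(t - α - 1)² + 4 (t - α - 1) + 4 (n - 1) t`. Maximising over `t > 0` gives
`S₂ ≤ ((n - 1)(α + 1) + n²) / (3 (α + 1)(α + 5))`, and the single term `1/(x_k - x_{k+1})²`
of `S₂` is therefore small; for `α ≥ n/C` the bound is at most `2 (C + 1) n / (3 α)`.
-/

/-- The generalized Laguerre polynomial `L_n^{(α)}`, as a function on `ℝ`, defined by
`L_n^{(α)}(x) = ∑_{i=0}^{n} (−1)^i · (∏_{j=i+1}^{n} (α + j)) / ((n − i)! · i!) · x^i`. -/
noncomputable def laguerre (n : ℕ) (α : ℝ) : ℝ → ℝ := fun x =>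
  ∑ i ∈ Finset.range (n + 1),
    (-1 : ℝ) ^ i * (∏ j ∈ Finset.Icc (i + 1) n, (α + (j : ℝ))) /
      (((n - i).factorial : ℝ) * ((i.factorial : ℝ))) * x ^ i

open Polynomial Finset

namespace Polynomial

variable {K ι : Type*} [Field K]

theorem eq_C_leadingCoeff_mul_prod_X_sub_C {p : K[X]} {s : Finset ι} {x : ι → K}
    (hx : Set.InjOn x s) (hroot : ∀ i ∈ s, p.IsRoot (x i)) (hdeg : p.natDegree ≤ #s)
    (hp : p ≠ 0) : p = C p.leadingCoeff * ∏ i ∈ s, (X - C (x i)) := by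
  have hle : s.val.map x ≤ p.roots :=
    (Multiset.le_iff_subset (s.nodup.map_on fun i hi j hj => hx hi hj)).2 fun y hy => by
      obtain ⟨i, hi, rfl⟩ := Multiset.mem_map.1 hy
      exact (mem_roots hp).2 (hroot i hi)
  have hroots : s.val.map x = p.roots := Multiset.eq_of_le_of_card_le hle <| by
    simpa using (card_roots' p).trans hdeg
  have hcard : Multiset.card p.roots = p.natDegree :=
    le_antisymm (card_roots' p) (by simpa [← hroots] using hdeg)
  conv_lhs => rw [← C_leadingCoeff_mul_prod_multiset_X_sub_C hcard, ← hroots]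
  rw [Multiset.map_map]
  rfl

theorem iterate_derivative_X_sub_C_mul (t : K) (q : K[X]) (m : ℕ) :
    derivative^[m + 1] ((X - C t) * q) =
      C ((m : K) + 1) * derivative^[m] q + (X - C t) * derivative^[m + 1] q := by
  induction m with
  | zero => simp [derivative_mul]
  | succ m ih =>
    rw [Function.iterate_succ_apply', ih, Function.iterate_succ_apply' _ (m + 1),
      Function.iterate_succ_apply' _ m]
    simp only [derivative_add, derivative_mul, derivative_C, derivative_sub, derivative_X]
    push_cast
    simp only [map_add, map_one]
    ring

theorem eval_iterate_derivative_X_sub_C_mul (t : K) (q : K[X]) (m : ℕ) :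
    (derivative^[m + 1] ((X - C t) * q)).eval t = ((m : K) + 1) * (derivative^[m] q).eval t := by
  simp [iterate_derivative_X_sub_C_mul]

variable [DecidableEq ι] {s : Finset ι} {x : ι → K} {t : K}

theorem eval_prod_erase_X_sub_C (ht : ∀ i ∈ s, x i ≠ t) {i : ι} (hi : i ∈ s) :
    (∏ j ∈ s.erase i, (X - C (x j))).eval t =
      (∏ j ∈ s, (X - C (x j))).eval t * (t - x i)⁻¹ := by
  have hne : t - x i ≠ 0 := sub_ne_zero.2 (ht i hi).symm
  simp only [eval_prod, eval_sub, eval_X, eval_C]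
  rw [← prod_erase_mul _ _ hi]
  field_simp

theorem eval_derivative_prod_X_sub_C (ht : ∀ i ∈ s, x i ≠ t) :
    (derivative (∏ i ∈ s, (X - C (x i)))).eval t =
      (∏ i ∈ s, (X - C (x i))).eval t * ∑ i ∈ s, (t - x i)⁻¹ := by
  rw [derivative_prod_finset, eval_finsetSum, mul_sum]
  refine sum_congr rfl fun i hi => ?_
  simp [eval_prod_erase_X_sub_C ht hi]

theorem eval_derivative_derivative_prod_X_sub_C (ht : ∀ i ∈ s, x i ≠ t) :
    (derivative (derivative (∏ i ∈ s, (X - C (x i))))).eval t =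
      (∏ i ∈ s, (X - C (x i))).eval t *
        ((∑ i ∈ s, (t - x i)⁻¹) ^ 2 - ∑ i ∈ s, (t - x i)⁻¹ ^ 2) := by
  have hterm : ∀ i ∈ s, (derivative (∏ j ∈ s.erase i, (X - C (x j)))).eval t =
      (∏ j ∈ s, (X - C (x j))).eval t *
        ((t - x i)⁻¹ * ∑ j ∈ s, (t - x j)⁻¹ - (t - x i)⁻¹ ^ 2) := by
    intro i hi
    rw [eval_derivative_prod_X_sub_C fun j hj => ht j (mem_of_mem_erase hj),
      eval_prod_erase_X_sub_C ht hi, ← add_sum_erase _ _ hi]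
    ring
  rw [derivative_prod_finset, derivative_sum, eval_finsetSum]
  simp only [derivative_sub, derivative_X, derivative_C, sub_zero, mul_one]
  rw [sum_congr rfl hterm, ← mul_sum, sum_sub_distrib, ← sum_mul]
  ring

end Polynomial

noncomputable def laguerreCoeff (n : ℕ) (α : ℝ) (i : ℕ) : ℝ :=
  (-1 : ℝ) ^ i * (∏ j ∈ Icc (i + 1) n, (α + (j : ℝ))) /
    (((n - i).factorial : ℝ) * (i.factorial : ℝ))

noncomputable def laguerrePoly (n : ℕ) (α : ℝ) : ℝ[X] :=
  ∑ i ∈ range (n + 1), C (laguerreCoeff n α i) * X ^ i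

section LaguerrePoly

variable (n : ℕ) (α : ℝ)

theorem eval_laguerrePoly (y : ℝ) : (laguerrePoly n α).eval y = laguerre n α y := by
  simp [laguerrePoly, laguerre, laguerreCoeff, eval_finsetSum]

theorem coeff_laguerrePoly (m : ℕ) :
    (laguerrePoly n α).coeff m = if m ≤ n then laguerreCoeff n α m else 0 := by
  simp [laguerrePoly, coeff_X_pow]

theorem laguerreCoeff_succ {i : ℕ} (h : i < n) :
    ((i : ℝ) + 1) * (α + i + 1) * laguerreCoeff n α (i + 1) =
      ((i : ℝ) - n) * laguerreCoeff n α i := by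
  have hprod : ∏ j ∈ Icc (i + 1) n, (α + (j : ℝ)) =
      (α + i + 1) * ∏ j ∈ Icc (i + 2) n, (α + (j : ℝ)) := by
    rw [← insert_Icc_add_one_left_eq_Icc h, prod_insert (by simp), Nat.cast_add_one, ← add_assoc]
    rfl
  have hfact : ((n - i).factorial : ℝ) = ((n : ℝ) - i) * ((n - (i + 1)).factorial : ℝ) := by
    have hsucc : ((n - (i + 1) + 1 : ℕ) : ℝ) = n - i := by
      rw [show n - (i + 1) + 1 = n - i by omega, Nat.cast_sub h.le]
    rw [show n - i = n - (i + 1) + 1 by omega, Nat.factorial_succ, Nat.cast_mul, hsucc]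
  have hni : (n : ℝ) - i ≠ 0 := sub_ne_zero.2 (by exact_mod_cast h.ne')
  simp only [laguerreCoeff, hprod, hfact, Nat.factorial_succ]
  push_cast
  field_simp
  ring

theorem coeff_laguerrePoly_succ (i : ℕ) :
    ((i : ℝ) + 1) * (α + i + 1) * (laguerrePoly n α).coeff (i + 1) =
      ((i : ℝ) - n) * (laguerrePoly n α).coeff i := by
  simp only [coeff_laguerrePoly]
  rcases lt_trichotomy i n with h | rfl | h
  · rw [if_pos (show i + 1 ≤ n from h), if_pos h.le]
    exact laguerreCoeff_succ n α h
  · simp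
  · rw [if_neg (by omega), if_neg (by omega)]
    simp

theorem laguerrePoly_ode :
    X * derivative^[2] (laguerrePoly n α) + (C (α + 1) - X) * derivative (laguerrePoly n α)
      + C (n : ℝ) * laguerrePoly n α = 0 := by
  ext m
  simp only [Function.iterate_succ_apply', Function.iterate_zero_apply]
  have hrec := coeff_laguerrePoly_succ n α m
  rcases m with _ | m
  · simp only [coeff_add, sub_mul, coeff_sub, mul_coeff_zero, coeff_X_zero,
      coeff_C_zero, coeff_derivative, coeff_zero]
    push_cast at hrec ⊢
    linear_combination hrec
  · simp only [coeff_add, sub_mul, coeff_sub, coeff_C_mul, coeff_X_mul, coeff_derivative,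
      coeff_zero]
    push_cast at hrec ⊢
    linear_combination hrec

theorem laguerrePoly_ode_derivative :
    X * derivative^[3] (laguerrePoly n α) + (C (α + 2) - X) * derivative^[2] (laguerrePoly n α)
      + C ((n : ℝ) - 1) * derivative (laguerrePoly n α) = 0 := by
  have h := congrArg derivative (laguerrePoly_ode n α)
  simp only [derivative_mul, derivative_sub, derivative_X, derivative_C, derivative_one,
    derivative_zero, Function.iterate_succ_apply', Function.iterate_zero_apply, map_add,
    map_one] at h
  simp only [Function.iterate_succ_apply', Function.iterate_zero_apply, map_add, map_sub,
    map_one, map_ofNat]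
  linear_combination h

theorem coeff_laguerrePoly_self_ne_zero : (laguerrePoly n α).coeff n ≠ 0 := by
  simp [coeff_laguerrePoly, laguerreCoeff, Nat.factorial_ne_zero]

theorem natDegree_laguerrePoly : (laguerrePoly n α).natDegree = n := by
  refine natDegree_eq_of_le_of_coeff_ne_zero ?_ ?_
  · rw [natDegree_le_iff_coeff_eq_zero]
    intro m hm
    rw [coeff_laguerrePoly, if_neg (by exact_mod_cast hm.not_ge)]
  · exact coeff_laguerrePoly_self_ne_zero n α

theorem laguerre_pos_of_nonpos (hα : -1 < α) {y : ℝ} (hy : y ≤ 0) : 0 < laguerre n α y := by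
  have hcoeff : ∀ i, 0 < (∏ j ∈ Icc (i + 1) n, (α + (j : ℝ))) /
      (((n - i).factorial : ℝ) * (i.factorial : ℝ)) := fun i => by
    refine div_pos (prod_pos fun j hj => ?_) (by positivity)
    have : (1 : ℝ) ≤ j := by exact_mod_cast (mem_Icc.1 hj).1.trans' (Nat.le_add_left 1 i)
    linarith
  refine sum_pos' (fun i _ => ?_) ⟨0, by simp, by simpa using hcoeff 0⟩
  calc (0 : ℝ) ≤ (∏ j ∈ Icc (i + 1) n, (α + (j : ℝ))) /
        (((n - i).factorial : ℝ) * (i.factorial : ℝ)) * (-y) ^ i :=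
        mul_nonneg (hcoeff i).le (pow_nonneg (neg_nonneg.2 hy) i)
    _ = _ := by rw [neg_pow]; ring

theorem pos_of_laguerre_eq_zero (hα : -1 < α) {y : ℝ} (hy : laguerre n α y = 0) : 0 < y := by
  by_contra! h
  exact (laguerre_pos_of_nonpos n α hα h).ne' hy

variable {n α} {ι : Type*} [DecidableEq ι] {s : Finset ι} {x : ι → ℝ} {c t : ℝ}

theorem laguerrePoly_sum_inv_sq_sub_roots (hc : c ≠ 0)
    (hfac : laguerrePoly n α = C c * ((X - C t) * ∏ i ∈ s, (X - C (x i))))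
    (ht : ∀ i ∈ s, x i ≠ t) :
    12 * t ^ 2 * ∑ i ∈ s, (t - x i)⁻¹ ^ 2 =
      -(t - (α + 1)) ^ 2 + 4 * (t - (α + 1)) + 4 * ((n : ℝ) - 1) * t := by
  set G := ∏ i ∈ s, (X - C (x i))
  set S₁ := ∑ i ∈ s, (t - x i)⁻¹
  set S₂ := ∑ i ∈ s, (t - x i)⁻¹ ^ 2
  have hG : G.eval t ≠ 0 := by
    simp only [G, eval_prod, eval_sub, eval_X, eval_C]
    exact prod_ne_zero_iff.2 fun i hi => sub_ne_zero.2 (ht i hi).symm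
  have hG₁ : (derivative G).eval t = G.eval t * S₁ := eval_derivative_prod_X_sub_C ht
  have hG₂ : (derivative (derivative G)).eval t = G.eval t * (S₁ ^ 2 - S₂) :=
    eval_derivative_derivative_prod_X_sub_C ht
  have hcG : c * G.eval t ≠ 0 := mul_ne_zero hc hG
  have hP : (laguerrePoly n α).eval t = 0 := by simp [hfac]
  have hP₁ : (derivative (laguerrePoly n α)).eval t = c * G.eval t := by simp [hfac]
  have hP₂ : (derivative^[2] (laguerrePoly n α)).eval t = c * (2 * (G.eval t * S₁)) := by
    rw [hfac, iterate_derivative_C_mul, eval_C_mul, eval_iterate_derivative_X_sub_C_mul]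
    simp only [Function.iterate_one, hG₁]
    ring
  have hP₃ : (derivative^[3] (laguerrePoly n α)).eval t =
      c * (3 * (G.eval t * (S₁ ^ 2 - S₂))) := by
    rw [hfac, iterate_derivative_C_mul, eval_C_mul, eval_iterate_derivative_X_sub_C_mul]
    simp only [Function.iterate_succ_apply', Function.iterate_zero_apply, hG₂]
    ring
  have hode₁ := congrArg (eval t) (laguerrePoly_ode n α)
  have hode₂ := congrArg (eval t) (laguerrePoly_ode_derivative n α)
  simp only [eval_add, eval_mul, eval_sub, eval_X, eval_C, eval_zero, hP, hP₁, hP₂, hP₃]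
    at hode₁ hode₂
  have h₁ : 2 * t * S₁ = t - α - 1 :=
    mul_left_cancel₀ hcG (by linear_combination hode₁)
  have h₂ : 3 * t * (S₁ ^ 2 - S₂) + 2 * (α + 2 - t) * S₁ + ((n : ℝ) - 1) = 0 :=
    mul_left_cancel₀ hcG (by linear_combination hode₂)
  linear_combination (-4 * t) * h₂ + (6 * t * S₁ - (t - α - 1) + 4) * h₁

theorem laguerrePoly_sum_inv_sq_sub_roots_le (hα : -1 < α) (hc : c ≠ 0)
    (hfac : laguerrePoly n α = C c * ((X - C t) * ∏ i ∈ s, (X - C (x i))))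
    (ht : ∀ i ∈ s, x i ≠ t) :
    3 * (α + 1) * (α + 5) * ∑ i ∈ s, (t - x i)⁻¹ ^ 2 ≤ ((n : ℝ) - 1) * (α + 1) + n ^ 2 := by
  have hid := laguerrePoly_sum_inv_sq_sub_roots hc hfac ht
  have ht₀ : 0 < t := pos_of_laguerre_eq_zero n α hα (by simp [← eval_laguerrePoly, hfac])
  -- maximising the right-hand side of `hid` over `t` amounts to completing a square
  have hsq : t ^ 2 * (3 * (α + 1) * (α + 5) * ∑ i ∈ s, (t - x i)⁻¹ ^ 2)
      + (t * (α + 1 + 2 * n) - (α + 1) * (α + 5)) ^ 2 / 4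
      = t ^ 2 * (((n : ℝ) - 1) * (α + 1) + n ^ 2) := by
    linear_combination ((α + 1) * (α + 5) / 4) * hid
  refine le_of_mul_le_mul_left ?_ (pow_pos ht₀ 2)
  nlinarith [sq_nonneg (t * (α + 1 + 2 * n) - (α + 1) * (α + 5))]

end LaguerrePoly

theorem laguerre_root_gap_sq_ge {n : ℕ} {α : ℝ} (hα : -1 < α) {x : ℕ → ℝ}
    (hzero : ∀ i ∈ Icc 1 n, laguerre n α (x i) = 0) (hanti : StrictAntiOn x (Icc 1 n))
    {k : ℕ} (hk : 1 ≤ k) (hkn : k < n) :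
    3 * (α + 1) * (α + 5) ≤ (((n : ℝ) - 1) * (α + 1) + n ^ 2) * (x k - x (k + 1)) ^ 2 := by
  have hkI : k ∈ Icc 1 n := mem_Icc.2 ⟨hk, hkn.le⟩
  have hk₁I : k + 1 ∈ Icc 1 n := mem_Icc.2 ⟨by omega, hkn⟩
  have hP : laguerrePoly n α ≠ 0 := fun h => coeff_laguerrePoly_self_ne_zero n α (by simp [h])
  have hfac := eq_C_leadingCoeff_mul_prod_X_sub_C hanti.injOn
    (fun i hi => by simp [IsRoot, eval_laguerrePoly, hzero i hi])
    (by simp [natDegree_laguerrePoly]) hP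
  rw [← mul_prod_erase _ _ hkI] at hfac
  have hne : ∀ i ∈ (Icc 1 n).erase k, x i ≠ x k := fun i hi =>
    hanti.injOn.ne (mem_of_mem_erase hi) hkI (ne_of_mem_erase hi)
  have hsum := laguerrePoly_sum_inv_sq_sub_roots_le hα (leadingCoeff_ne_zero.2 hP) hfac hne
  have hd : 0 < x k - x (k + 1) := sub_pos.2 (hanti hkI hk₁I (by omega))
  have hsingle : (x k - x (k + 1))⁻¹ ^ 2 ≤ ∑ i ∈ (Icc 1 n).erase k, (x k - x i)⁻¹ ^ 2 :=
    single_le_sum (f := fun i => (x k - x i)⁻¹ ^ 2) (fun i _ => sq_nonneg _)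
      (mem_erase.2 ⟨by omega, hk₁I⟩)
  have hβ : 0 ≤ 3 * (α + 1) * (α + 5) := by nlinarith
  calc 3 * (α + 1) * (α + 5)
      = 3 * (α + 1) * (α + 5) * (x k - x (k + 1))⁻¹ ^ 2 * (x k - x (k + 1)) ^ 2 := by
        field_simp
    _ ≤ (((n : ℝ) - 1) * (α + 1) + n ^ 2) * (x k - x (k + 1)) ^ 2 := by
        gcongr
        exact (mul_le_mul_of_nonneg_left hsingle hβ).trans hsum

theorem laguerre_spacing_lower_bound_large_alpha_sharp_general (C : ℝ) (hC : 0 < C)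
    (n : ℕ) (α : ℝ) (hαC : α ≥ n / C)
    (x : ℕ → ℝ)
    (hzero : ∀ i ∈ Finset.Icc 1 n, laguerre n α (x i) = 0)
    (hanti : ∀ i ∈ Finset.Icc 1 n, ∀ j ∈ Finset.Icc 1 n, i < j → x j < x i) :
    ∀ k ∈ Finset.Icc 1 (n - 1),
      x k - x (k + 1) ≥ Real.sqrt (3 / (2 * (C + 1))) * Real.sqrt (α / n) := by
  intro k hk
  obtain ⟨hk₁, hkn⟩ := mem_Icc.1 hk
  have hn : (2 : ℝ) ≤ n := by exact_mod_cast (show 2 ≤ n by omega)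
  have hα : 0 < α := (div_pos (by linarith) hC).trans_le hαC
  have hnα : (n : ℝ) ≤ C * α := by rwa [ge_iff_le, div_le_iff₀ hC, mul_comm] at hαC
  have hgap := laguerre_root_gap_sq_ge (by linarith) hzero hanti hk₁ (by omega : k < n)
  have hd : 0 < x k - x (k + 1) := sub_pos.2 (hanti _ (mem_Icc.2 ⟨hk₁, by omega⟩) _
    (mem_Icc.2 ⟨by omega, by omega⟩) (by omega))
  have hsmall : α * (((n : ℝ) - 1) * (α + 1) + n ^ 2) ≤ (C + 1) * n * (α + 1) ^ 2 := by
    nlinarith [mul_le_mul_of_nonneg_left hnα (by positivity : (0 : ℝ) ≤ α * n)]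
  rw [ge_iff_le, ← Real.sqrt_mul (by positivity), Real.sqrt_le_left hd.le, div_mul_div_comm,
    div_le_iff₀ (by positivity)]
  nlinarith [mul_le_mul_of_nonneg_left hgap hα.le,
    mul_le_mul_of_nonneg_right hsmall (sq_nonneg (x k - x (k + 1)))]

/-- Let `C > 0`, `n ≥ 2`, `α > −1` with `α ≥ n/C`, and let `x_{n,n}(α) < ⋯ < x_{n,1}(α)` be
the `n` zeros of `L_n^{(α)}` (here `x k = x_{n,k}(α)`, listed in decreasing order).  Then for
every `k ∈ {1, …, n−1}`, `x_{n,k}(α) − x_{n,k+1}(α) ≥ √(3/(2(C+1))) · √(α/n)`. -/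
theorem laguerre_spacing_lower_bound_large_alpha_sharp (C : ℝ) (hC : 0 < C)
    (n : ℕ) (hn : 2 ≤ n) (α : ℝ) (hα : -1 < α) (hαC : α ≥ n / C)
    (x : ℕ → ℝ)
    (hzero : ∀ i ∈ Finset.Icc 1 n, laguerre n α (x i) = 0)
    (hanti : ∀ i ∈ Finset.Icc 1 n, ∀ j ∈ Finset.Icc 1 n, i < j → x j < x i)
    (hall : ∀ y : ℝ, laguerre n α y = 0 → ∃ i ∈ Finset.Icc 1 n, y = x i) :
    ∀ k ∈ Finset.Icc 1 (n - 1),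
      x k - x (k + 1) ≥ Real.sqrt (3 / (2 * (C + 1))) * Real.sqrt (α / n) :=
  laguerre_spacing_lower_bound_large_alpha_sharp_general C hC n α hαC x hzero hanti
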